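/- (Recursive information relevance.) In the hard-instance construction with k ≥ 2 features, run the sequential logit-passing protocol on a path of D = pk agents (1 ≤ p ≤ k), where agent i observes only the single feature x_ℓ with ℓ = ((i−1) mod k) + 1, and each agent's minimizer is assumed to exist and be unique. Then the logit z_{pk} produced at the end of pass p is almost surely a linear combination of the features x_{k−p+1}, x_{k−p+2}, …, x_k only. -/

import Mathlib

/-!
Index everything from `0`, so that `x_0 = Z_0`, `x_j = Z_j - Z_{j-1}`, `∑ x_j = Z_{k-1}` and
`E[y | x] = σ(Z_{k-1})`. A logit that is a combination of the `x_j` with `j > r` is a function of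
`(Z_j)_{j ≥ r}`, while a feature `x_m` with `m < r` is a centred function of `(Z_j)_{j < r}`. Hence
`x_m` is orthogonal to the residual `σ(z) - y`; by convexity of the loss the agent observing it
cannot do better than rescaling its incoming logit, and by uniqueness that is what it does.

So if the logit entering pass `q` is a combination of `x_{k-q}, …, x_{k-1}`, the agents of that pass
observing `x_0, …, x_{k-q-2}` only rescale it, and the remaining ones add `x_{k-q-1}, …, x_{k-1}`:
the support moves down by exactly one feature per pass.
-/

open MeasureTheory ProbabilityTheory

/-- The sigmoid (logistic) function `σ(z) = 1 / (1 + e^{-z})`. -/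
noncomputable def sigmoid (z : ℝ) : ℝ := 1 / (1 + Real.exp (-z))

/-- Expected BCE loss of a logit random variable `f` against a label random variable `Y`. -/
noncomputable def rvBceLoss {Ω : Type*} [MeasurableSpace Ω] (P : Measure Ω)
    (Y : Ω → ℝ) (f : Ω → ℝ) : ℝ :=
  ∫ ω, (Real.log (1 + Real.exp (f ω)) - Y ω * f ω) ∂P

/-- Logits of the sequential logit-passing protocol in the hard instance, where agent `i+1`
observes the single feature with (0-indexed) index `i % k`:
`z_0 ≡ 0` and `z_{i+1} = w_i x_{i % k} + v_i z_i`. -/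
noncomputable def cyclicLogit {Ω : Type*} {k : ℕ} (hk : 0 < k) (X : Ω → Fin k → ℝ)
    (w v : ℕ → ℝ) : ℕ → Ω → ℝ
  | 0 => fun _ => 0
  | (i + 1) => fun ω => w i * X ω ⟨i % k, Nat.mod_lt i hk⟩ + v i * cyclicLogit hk X w v i ω

lemma sigmoid_eq_real_sigmoid : sigmoid = Real.sigmoid := funext fun _ => one_div _

lemma measurable_sigmoid : Measurable sigmoid := by
  rw [sigmoid_eq_real_sigmoid]; exact continuous_sigmoid.measurable

lemma abs_sigmoid_le_one (z : ℝ) : |sigmoid z| ≤ 1 := by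
  rw [sigmoid_eq_real_sigmoid, abs_of_nonneg (Real.sigmoid_nonneg z)]
  exact Real.sigmoid_le_one z

lemma log_one_add_exp_nonneg (x : ℝ) : 0 ≤ Real.log (1 + Real.exp x) :=
  Real.log_nonneg (by linarith [Real.exp_pos x])

lemma log_one_add_exp_le (x : ℝ) : Real.log (1 + Real.exp x) ≤ Real.log 2 + |x| := by
  have h : 1 + Real.exp x ≤ 2 * Real.exp |x| := by
    linarith [Real.exp_le_exp.2 (le_abs_self x), Real.one_le_exp (abs_nonneg x)]
  calc Real.log (1 + Real.exp x) ≤ Real.log (2 * Real.exp |x|) := Real.log_le_log (by positivity) h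
    _ = Real.log 2 + |x| := by rw [Real.log_mul two_ne_zero (Real.exp_ne_zero _), Real.log_exp]

/-- Tangent-line inequality for the convex softplus function, whose derivative is the sigmoid. -/
lemma log_one_add_exp_add_mul_sigmoid_le (a b : ℝ) :
    Real.log (1 + Real.exp a) + (b - a) * sigmoid a ≤ Real.log (1 + Real.exp b) := by
  have ha : 0 < 1 + Real.exp a := by positivity
  have hs : sigmoid a = Real.exp a / (1 + Real.exp a) := by
    rw [sigmoid, Real.exp_neg]; field_simp; ring
  set s := Real.exp a / (1 + Real.exp a) with hs_def
  have hs0 : 0 ≤ s := by positivity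
  have hs1 : 0 ≤ 1 - s := by rw [hs_def, sub_nonneg, div_le_one ha]; linarith
  have hjensen : Real.exp (s * (b - a)) ≤ (1 - s) + s * Real.exp (b - a) := by
    simpa using convexOn_exp.2 (Set.mem_univ 0) (Set.mem_univ (b - a)) hs1 hs0 (by ring)
  have hratio : (1 - s) + s * Real.exp (b - a) = (1 + Real.exp b) / (1 + Real.exp a) := by
    rw [Real.exp_sub, hs_def]; field_simp; ring
  have hlog := Real.log_le_log (Real.exp_pos _) (hjensen.trans_eq hratio)
  rw [Real.log_exp, Real.log_div (by positivity) ha.ne'] at hlog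
  rw [hs]
  linarith

section BinaryCrossEntropy

variable {Ω : Type*} [MeasurableSpace Ω] {P : Measure Ω} [IsFiniteMeasure P] {Y : Ω → ℝ}

lemma integrable_bce_integrand {f : Ω → ℝ} (hf : Integrable f P) (hY : AEStronglyMeasurable Y P)
    (hYb : ∀ᵐ ω ∂P, |Y ω| ≤ 1) :
    Integrable (fun ω => Real.log (1 + Real.exp (f ω)) - Y ω * f ω) P := by
  refine Integrable.sub ?_ (hf.bdd_mul hY hYb)
  have hcont : Continuous fun x : ℝ => Real.log (1 + Real.exp x) :=
    (continuous_const.add Real.continuous_exp).log fun x =>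
    (by positivity : (0 : ℝ) < 1 + Real.exp x).ne'
  refine ((integrable_const (Real.log 2)).add hf.abs).mono'
    (hcont.comp_aestronglyMeasurable hf.1) (ae_of_all _ fun ω => ?_)
  rw [Real.norm_eq_abs, abs_of_nonneg (log_one_add_exp_nonneg _)]
  exact log_one_add_exp_le _

/-- By convexity of the loss, a direction orthogonal to the residual `σ(f) - Y` is not a descent
direction. -/
lemma rvBceLoss_le_add_of_integral_mul_eq {f x : Ω → ℝ} (c : ℝ) (hf : Integrable f P)
    (hx : Integrable x P) (hY : AEStronglyMeasurable Y P) (hYb : ∀ᵐ ω ∂P, |Y ω| ≤ 1)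
    (hxf : ∫ ω, x ω * sigmoid (f ω) ∂P = 0) (hxY : ∫ ω, x ω * Y ω ∂P = 0) :
    rvBceLoss P Y f ≤ rvBceLoss P Y (fun ω => c * x ω + f ω) := by
  have hxσ : Integrable (fun ω => x ω * sigmoid (f ω)) P :=
    hx.mul_bdd (measurable_sigmoid.comp_aemeasurable hf.1.aemeasurable).aestronglyMeasurable
      (ae_of_all _ fun ω => abs_sigmoid_le_one _)
  have hxY' : Integrable (fun ω => x ω * Y ω) P := hx.mul_bdd hY hYb
  have hres : Integrable (fun ω => c * (x ω * sigmoid (f ω) - x ω * Y ω)) P :=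
    (hxσ.sub hxY').const_mul c
  calc rvBceLoss P Y f
      = ∫ ω, (Real.log (1 + Real.exp (f ω)) - Y ω * f ω
          + c * (x ω * sigmoid (f ω) - x ω * Y ω)) ∂P := by
        rw [integral_add (integrable_bce_integrand hf hY hYb) hres,
          integral_const_mul, integral_sub hxσ hxY', hxf, hxY, sub_zero, mul_zero, add_zero,
          rvBceLoss]
    _ ≤ rvBceLoss P Y (fun ω => c * x ω + f ω) := by
      refine integral_mono ((integrable_bce_integrand hf hY hYb).add hres)
        (integrable_bce_integrand ((hx.const_mul c).add hf) hY hYb) fun ω => ?_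
      have := log_one_add_exp_add_mul_sigmoid_le (f ω) (c * x ω + f ω)
      simp only
      linarith

end BinaryCrossEntropy

lemma ProbabilityTheory.iIndepFun.indepFun_comp_ite_mem {Ω ι β γ δ : Type*} [MeasurableSpace Ω]
    {P : Measure Ω} [DecidableEq ι] [MeasurableSpace β] [Zero β] [MeasurableSpace γ]
    [MeasurableSpace δ] {Z : ι → Ω → β}
    (hZ : iIndepFun Z P) (hm : ∀ i, Measurable (Z i)) {S T : Finset ι} (hST : Disjoint S T)
    {φ : (ι → β) → γ} {ψ : (ι → β) → δ} (hφ : Measurable φ) (hψ : Measurable ψ) :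
    IndepFun (fun ω => φ fun i => if i ∈ S then Z i ω else 0)
      (fun ω => ψ fun i => if i ∈ T then Z i ω else 0) P := by
  have hext : ∀ U : Finset ι,
      Measurable fun s : U → β => fun i => if h : i ∈ U then s ⟨i, h⟩ else 0 := fun U =>
    measurable_pi_lambda _ fun i => by
      split_ifs
      · exact measurable_pi_apply _
      · exact measurable_const
  exact (hZ.indepFun_finset S T hST hm).comp (hφ.comp (hext S)) (hψ.comp (hext T))

def increment {k : ℕ} (g : Fin k → ℝ) (j : Fin k) : ℝ :=
  g j - if h : 0 < (j : ℕ) then g ⟨j - 1, by omega⟩ else 0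

lemma measurable_increment {k : ℕ} (j : Fin k) : Measurable fun g : Fin k → ℝ => increment g j := by
  unfold increment
  split_ifs
  · exact (measurable_pi_apply _).sub (measurable_pi_apply _)
  · exact (measurable_pi_apply _).sub measurable_const

lemma increment_congr {k : ℕ} {g g' : Fin k → ℝ} {j : Fin k} (hj : g j = g' j)
    (hpred : ∀ h : 0 < (j : ℕ), g ⟨j - 1, by omega⟩ = g' ⟨j - 1, by omega⟩) :
    increment g j = increment g' j := by
  unfold increment
  split_ifs with h
  · rw [hj, hpred h]
  · rw [hj]

lemma sum_increment {k : ℕ} (hk : 0 < k) (g : Fin k → ℝ) :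
    ∑ j, increment g j = g ⟨k - 1, by omega⟩ := by
  set G : ℕ → ℝ := fun n => if h : 0 < n ∧ n - 1 < k then g ⟨n - 1, h.2⟩ else 0
  have hG : ∀ j : Fin k, increment g j = G (j + 1) - G j := fun j => by
    have hsucc : G (j + 1) = g j := by simp [G]
    have hself : G j = if h : 0 < (j : ℕ) then g ⟨j - 1, by omega⟩ else 0 := by
      by_cases h : 0 < (j : ℕ) <;> simp [G, h, show (j : ℕ) - 1 < k by omega]
    rw [hsucc, hself, increment]
  simp only [hG]
  rw [Fin.sum_univ_eq_sum_range (fun j => G (j + 1) - G j), Finset.sum_range_sub]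
  simp [G, hk]

/-- The hard instance, indexed from `0`: `x_0 = Z_0`, `x_j = Z_j - Z_{j-1}` and
`E[y | x] = σ(Z_{k-1})`. Of the Gaussian law of the `Z_j` only integrability and centredness are
kept, and of the Bernoulli label only `|y| ≤ 1`. -/
structure IsHardInstance {Ω : Type*} [MeasurableSpace Ω] (P : Measure Ω) {k : ℕ} (hk0 : 0 < k)
    (Z : Fin k → Ω → ℝ) (X : Ω → Fin k → ℝ) (Y : Ω → ℝ) : Prop where
  measurable_Z : ∀ i, Measurable (Z i)
  iIndepFun_Z : iIndepFun Z P
  integrable_Z : ∀ i, Integrable (Z i) P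
  integral_Z : ∀ i, ∫ ω, Z i ω ∂P = 0
  X_zero : ∀ ω, X ω ⟨0, hk0⟩ = Z ⟨0, hk0⟩ ω
  X_pos : ∀ ω (i : Fin k), 0 < (i : ℕ) → X ω i = Z i ω - Z ⟨(i : ℕ) - 1, by omega⟩ ω
  measurable_Y : Measurable Y
  abs_Y_le_one : ∀ᵐ ω ∂P, |Y ω| ≤ 1
  integral_Y_mul : ∀ f : (Fin k → ℝ) → ℝ, Measurable f → Integrable (fun ω => f (X ω)) P →
    ∫ ω, Y ω * f (X ω) ∂P = ∫ ω, sigmoid (∑ j, X ω j) * f (X ω) ∂P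

def InFeatureSpan {Ω : Type*} [MeasurableSpace Ω] (P : Measure Ω) {k : ℕ} (X : Ω → Fin k → ℝ)
    (t : ℕ) (f : Ω → ℝ) : Prop :=
  ∃ c : Fin k → ℝ, (∀ j : Fin k, (j : ℕ) < t → c j = 0) ∧ f =ᵐ[P] fun ω => ∑ j, c j * X ω j

namespace InFeatureSpan

variable {Ω : Type*} [MeasurableSpace Ω] {P : Measure Ω} {k : ℕ} {X : Ω → Fin k → ℝ} {s t : ℕ}
  {f g : Ω → ℝ}

lemma zero : InFeatureSpan P X t fun _ => 0 :=
  ⟨0, fun _ _ => rfl, .of_forall fun _ => by simp⟩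

lemma feature {j : Fin k} (hj : t ≤ j) : InFeatureSpan P X t fun ω => X ω j := by
  classical
  refine ⟨Pi.single j 1, fun i hi => Pi.single_eq_of_ne (by omega) _, .of_forall fun ω => ?_⟩
  simp [Pi.single_apply]

lemma mono (hf : InFeatureSpan P X t f) (hst : s ≤ t) : InFeatureSpan P X s f :=
  let ⟨c, hc, hfc⟩ := hf
  ⟨c, fun j hj => hc j (by omega), hfc⟩

lemma congr (hf : InFeatureSpan P X t f) (hfg : f =ᵐ[P] g) : InFeatureSpan P X t g :=
  let ⟨c, hc, hfc⟩ := hf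
  ⟨c, hc, hfg.symm.trans hfc⟩

lemma const_mul (hf : InFeatureSpan P X t f) (a : ℝ) : InFeatureSpan P X t fun ω => a * f ω := by
  obtain ⟨c, hc, hfc⟩ := hf
  refine ⟨a • c, fun j hj => by simp [hc j hj], hfc.mono fun ω h => ?_⟩
  simp [h, Finset.mul_sum, mul_assoc]

lemma add (hf : InFeatureSpan P X t f) (hg : InFeatureSpan P X t g) :
    InFeatureSpan P X t fun ω => f ω + g ω := by
  obtain ⟨c, hc, hfc⟩ := hf
  obtain ⟨d, hd, hgd⟩ := hg
  refine ⟨c + d, fun j hj => by simp [hc j hj, hd j hj], ?_⟩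
  filter_upwards [hfc, hgd] with ω hf hg
  simp [hf, hg, add_mul, Finset.sum_add_distrib]

lemma integrable (hf : InFeatureSpan P X t f) (hX : ∀ j, Integrable (fun ω => X ω j) P) :
    Integrable f P :=
  let ⟨c, _, hfc⟩ := hf
  (integrable_finsetSum _ fun j _ => (hX j).const_mul (c j)).congr hfc.symm

end InFeatureSpan

namespace IsHardInstance

variable {Ω : Type*} [MeasurableSpace Ω] {P : Measure Ω} {k : ℕ} {hk0 : 0 < k}
  {Z : Fin k → Ω → ℝ} {X : Ω → Fin k → ℝ} {Y : Ω → ℝ}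

lemma X_eq_increment (H : IsHardInstance P hk0 Z X Y) (ω : Ω) (j : Fin k) :
    X ω j = increment (fun i => Z i ω) j := by
  unfold increment
  split_ifs with h
  · exact H.X_pos ω j h
  · obtain rfl : j = ⟨0, hk0⟩ := Fin.ext (Nat.eq_zero_of_not_pos h)
    simp [H.X_zero]

lemma sum_X (H : IsHardInstance P hk0 Z X Y) (ω : Ω) :
    ∑ j, X ω j = Z ⟨k - 1, by omega⟩ ω := by
  simp only [H.X_eq_increment ω]
  exact sum_increment hk0 _

lemma integrable_X (H : IsHardInstance P hk0 Z X Y) (j : Fin k) :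
    Integrable (fun ω => X ω j) P := by
  simp only [H.X_eq_increment, increment]
  split_ifs
  · exact (H.integrable_Z _).sub (H.integrable_Z _)
  · simpa using H.integrable_Z j

lemma integral_X (H : IsHardInstance P hk0 Z X Y) (j : Fin k) : ∫ ω, X ω j ∂P = 0 := by
  simp only [H.X_eq_increment, increment]
  split_ifs
  · rw [integral_sub (H.integrable_Z _) (H.integrable_Z _), H.integral_Z, H.integral_Z, sub_zero]
  · simpa using H.integral_Z j

/-- `x_m` is a function of `Z_m` and `Z_{m-1}` only, hence independent of `(Z_j)_{j ≥ r}`. -/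
lemma integral_X_mul_eq_zero (H : IsHardInstance P hk0 Z X Y) {r : ℕ} {m : Fin k}
    (hm : (m : ℕ) < r) {φ : (Fin k → ℝ) → ℝ} (hφ : Measurable φ) :
    ∫ ω, X ω m * φ (fun j => if r ≤ (j : ℕ) then Z j ω else 0) ∂P = 0 := by
  have hind := H.iIndepFun_Z.indepFun_comp_ite_mem H.measurable_Z
    (S := {j : Fin k | (j : ℕ) < r}) (T := {j : Fin k | r ≤ (j : ℕ)})
    (Finset.disjoint_filter.2 fun j _ h1 h2 => by omega) (measurable_increment m) hφ
  simp only [Finset.mem_filter_univ] at hind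
  have hX : (fun ω => X ω m)
      = fun ω => increment (fun j => if (j : ℕ) < r then Z j ω else 0) m := by
    funext ω
    rw [H.X_eq_increment]
    exact increment_congr (by simp [hm]) fun _ => by simp [show (m : ℕ) - 1 < r by omega]
  rw [← hX] at hind
  have hmask : Measurable fun ω (j : Fin k) => if r ≤ (j : ℕ) then Z j ω else 0 :=
    measurable_pi_lambda _ fun j => by
      split_ifs
      · exact H.measurable_Z j
      · exact measurable_const
  have := hind.integral_mul_eq_mul_integral (H.integrable_X m).1
    (hφ.comp hmask).aestronglyMeasurable
  simpa [H.integral_X m] using this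

lemma exists_measurable_ae_eq_of_inFeatureSpan (H : IsHardInstance P hk0 Z X Y) {r : ℕ}
    {f : Ω → ℝ} (hf : InFeatureSpan P X (r + 1) f) :
    ∃ φ : (Fin k → ℝ) → ℝ, Measurable φ ∧
      f =ᵐ[P] fun ω => φ (fun j => if r ≤ (j : ℕ) then Z j ω else 0) := by
  obtain ⟨c, hc, hfc⟩ := hf
  refine ⟨fun g => ∑ j, c j * increment g j,
    Finset.measurable_sum _ fun j _ => (measurable_increment j).const_mul _,
    hfc.mono fun ω h => ?_⟩
  rw [h]
  refine Finset.sum_congr rfl fun j _ => ?_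
  rcases lt_or_ge (j : ℕ) (r + 1) with hj | hj
  · simp [hc j hj]
  · rw [H.X_eq_increment]
    exact congrArg _ (increment_congr (by simp; omega) fun _ => by simp; omega)

lemma integral_X_mul_sigmoid_eq_zero (H : IsHardInstance P hk0 Z X Y) {r : ℕ} {m : Fin k}
    (hm : (m : ℕ) < r) {f : Ω → ℝ} (hf : InFeatureSpan P X (r + 1) f) :
    ∫ ω, X ω m * sigmoid (f ω) ∂P = 0 := by
  obtain ⟨φ, hφ, hfφ⟩ := H.exists_measurable_ae_eq_of_inFeatureSpan hf
  rw [integral_congr_ae (g := fun ω => X ω m * sigmoid (φ _)) (hfφ.mono fun ω h => by rw [h])]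
  exact H.integral_X_mul_eq_zero hm (measurable_sigmoid.comp hφ)

lemma integral_X_mul_Y_eq_zero (H : IsHardInstance P hk0 Z X Y) {r : ℕ} {m : Fin k}
    (hm : (m : ℕ) < r) (hr : r < k) : ∫ ω, X ω m * Y ω ∂P = 0 := by
  calc ∫ ω, X ω m * Y ω ∂P = ∫ ω, Y ω * (fun g => g m) (X ω) ∂P := by simp_rw [mul_comm]
    _ = ∫ ω, sigmoid (∑ j, X ω j) * X ω m ∂P :=
      H.integral_Y_mul _ (measurable_pi_apply m) (H.integrable_X m)
    _ = ∫ ω, X ω m * (fun g : Fin k → ℝ => sigmoid (g ⟨k - 1, by omega⟩))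
          (fun j : Fin k => if r ≤ (j : ℕ) then Z j ω else 0) ∂P := by
      simp_rw [H.sum_X, mul_comm, if_pos (show r ≤ k - 1 by omega)]
    _ = 0 := H.integral_X_mul_eq_zero (φ := fun g => sigmoid (g ⟨k - 1, by omega⟩)) hm
        (measurable_sigmoid.comp (measurable_pi_apply _))

end IsHardInstance

def IsUniqueAgentMinimizer {Ω : Type*} [MeasurableSpace Ω] (P : Measure Ω) (Y : Ω → ℝ) {k : ℕ}
    (hk0 : 0 < k) (X : Ω → Fin k → ℝ) (w v : ℕ → ℝ) (i : ℕ) : Prop :=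
  ∀ w' v' : ℝ,
    rvBceLoss P Y (fun ω => w' * X ω ⟨i % k, Nat.mod_lt i hk0⟩ + v' * cyclicLogit hk0 X w v i ω)
        ≤ rvBceLoss P Y (cyclicLogit hk0 X w v (i + 1)) →
      (fun ω => w' * X ω ⟨i % k, Nat.mod_lt i hk0⟩ + v' * cyclicLogit hk0 X w v i ω)
        =ᵐ[P] cyclicLogit hk0 X w v (i + 1)

section LogitPassing

variable {Ω : Type*} [MeasurableSpace Ω] {P : Measure Ω} {k : ℕ} {hk0 : 0 < k}
  {Z : Fin k → Ω → ℝ} {X : Ω → Fin k → ℝ} {Y : Ω → ℝ} {w v : ℕ → ℝ}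

lemma inFeatureSpan_cyclicLogit_succ_of_le {i t : ℕ}
    (hz : InFeatureSpan P X t (cyclicLogit hk0 X w v i)) (hi : t ≤ i % k) :
    InFeatureSpan P X t (cyclicLogit hk0 X w v (i + 1)) :=
  ((InFeatureSpan.feature (j := ⟨i % k, Nat.mod_lt i hk0⟩) hi).const_mul (w i)).add
    (hz.const_mul (v i))

lemma IsHardInstance.inFeatureSpan_cyclicLogit_succ_of_lt [IsFiniteMeasure P]
    (H : IsHardInstance P hk0 Z X Y) {i r : ℕ}
    (hz : InFeatureSpan P X (r + 1) (cyclicLogit hk0 X w v i)) (hi : i % k < r) (hr : r < k)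
    (huniq : IsUniqueAgentMinimizer P Y hk0 X w v i) :
    InFeatureSpan P X (r + 1) (cyclicLogit hk0 X w v (i + 1)) := by
  have hvz := hz.const_mul (v i)
  have hle : rvBceLoss P Y (fun ω => v i * cyclicLogit hk0 X w v i ω)
      ≤ rvBceLoss P Y (cyclicLogit hk0 X w v (i + 1)) :=
    rvBceLoss_le_add_of_integral_mul_eq (w i) (hvz.integrable H.integrable_X)
      (H.integrable_X _) H.measurable_Y.aestronglyMeasurable H.abs_Y_le_one
      (H.integral_X_mul_sigmoid_eq_zero hi hvz) (H.integral_X_mul_Y_eq_zero hi hr)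
  have hae := huniq 0 (v i) (by simpa using hle)
  exact hvz.congr (by simpa using hae)

lemma IsHardInstance.inFeatureSpan_cyclicLogit_pass [IsFiniteMeasure P]
    (H : IsHardInstance P hk0 Z X Y) {p q : ℕ} (hqp : q < p) (hpk : p ≤ k)
    (huniq : ∀ i < p * k, IsUniqueAgentMinimizer P Y hk0 X w v i)
    (hz : InFeatureSpan P X (k - q) (cyclicLogit hk0 X w v (q * k))) :
    InFeatureSpan P X (k - (q + 1)) (cyclicLogit hk0 X w v ((q + 1) * k)) := by
  have hmod : ∀ m < k, (q * k + m) % k = m := fun m hm => by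
    rw [Nat.mul_comm, Nat.mul_add_mod, Nat.mod_eq_of_lt hm]
  have hlt : ∀ m < k, q * k + m < p * k := fun m hm =>
    calc q * k + m < (q + 1) * k := by rw [Nat.succ_mul]; omega
      _ ≤ p * k := Nat.mul_le_mul_right k hqp
  have hearly : ∀ m ≤ k - (q + 1),
      InFeatureSpan P X (k - (q + 1) + 1) (cyclicLogit hk0 X w v (q * k + m)) := by
    intro m hm
    induction m with
    | zero => exact hz.mono (by omega)
    | succ m ih =>
      exact H.inFeatureSpan_cyclicLogit_succ_of_lt (i := q * k + m) (ih (by omega))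
        (by rw [hmod m (by omega)]; omega) (by omega) (huniq _ (hlt m (by omega)))
  have hlate : ∀ m, k - (q + 1) ≤ m → m ≤ k →
      InFeatureSpan P X (k - (q + 1)) (cyclicLogit hk0 X w v (q * k + m)) := by
    intro m hm
    induction m, hm using Nat.le_induction with
    | base => exact fun _ => (hearly _ le_rfl).mono (by omega)
    | succ m hm ih =>
      exact fun hmk => inFeatureSpan_cyclicLogit_succ_of_le (i := q * k + m) (ih (by omega))
        (by rw [hmod m (by omega)]; exact hm)
  simpa [Nat.succ_mul] using hlate k (by omega) le_rfl

end LogitPassing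

lemma IsHardInstance.of_gaussian {Ω : Type*} [MeasurableSpace Ω] {P : Measure Ω}
    {k : ℕ} {hk0 : 0 < k} {Z : Fin k → Ω → ℝ} {X : Ω → Fin k → ℝ} {Y : Ω → ℝ}
    (hZmeas : ∀ i, Measurable (Z i)) (hZindep : iIndepFun Z P)
    (hZgauss : ∀ i, Measure.map (Z i) P = gaussianReal 0 1)
    (hX0 : ∀ ω, X ω ⟨0, hk0⟩ = Z ⟨0, hk0⟩ ω)
    (hXsucc : ∀ ω (i : Fin k), 0 < (i : ℕ) → X ω i = Z i ω - Z ⟨(i : ℕ) - 1, by omega⟩ ω)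
    (hYmeas : Measurable Y) (hY01 : ∀ᵐ ω ∂P, Y ω = 0 ∨ Y ω = 1)
    (hYcond : ∀ f : (Fin k → ℝ) → ℝ, Measurable f → Integrable (fun ω => f (X ω)) P →
      ∫ ω, Y ω * f (X ω) ∂P = ∫ ω, sigmoid (∑ j, X ω j) * f (X ω) ∂P) :
    IsHardInstance P hk0 Z X Y where
  measurable_Z := hZmeas
  iIndepFun_Z := hZindep
  integrable_Z i := by
    rw [← Function.id_comp (Z i), ← integrable_map_measure aestronglyMeasurable_id
      (hZmeas i).aemeasurable, hZgauss i]
    exact (memLp_id_gaussianReal 1).integrable le_rfl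
  integral_Z i := by
    have hlaw : HasLaw (Z i) (gaussianReal 0 1) P := ⟨(hZmeas i).aemeasurable, hZgauss i⟩
    rw [hlaw.integral_eq, integral_id_gaussianReal]
  X_zero := hX0
  X_pos := hXsucc
  measurable_Y := hYmeas
  abs_Y_le_one := hY01.mono fun ω h => by rcases h with h | h <;> simp [h]
  integral_Y_mul := hYcond

/-- Recursive information relevance for the hard instance: with `k ≥ 2` i.i.d. standard
Gaussians `Z_1, …, Z_k`, features `x_1 = Z_1`, `x_i = Z_i − Z_{i−1}`, label
`y | x ~ Bernoulli(σ(Z_k))`, and the cyclic sequential logit-passing protocol run for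
`D = pk` agents (`1 ≤ p ≤ k`) with each agent's BCE minimizer existing and unique
(as a predictor, up to a.e. equality), the final logit `z_{pk}` is almost surely a linear
combination of the features `x_{k−p+1}, …, x_k` only. -/
theorem recursive_information_relevance
    {Ω : Type*} [MeasurableSpace Ω] (P : Measure Ω) [IsProbabilityMeasure P]
    (k p : ℕ) (hpk : p ≤ k)
    (hk0 : 0 < k)
    (Z : Fin k → Ω → ℝ) (hZmeas : ∀ i, Measurable (Z i))
    (hZindep : iIndepFun Z P)
    (hZgauss : ∀ i, Measure.map (Z i) P = gaussianReal 0 1)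
    (X : Ω → Fin k → ℝ)
    (hX0 : ∀ ω, X ω ⟨0, hk0⟩ = Z ⟨0, hk0⟩ ω)
    (hXsucc : ∀ ω (i : Fin k), 0 < (i : ℕ) →
      X ω i = Z i ω - Z ⟨(i : ℕ) - 1, by omega⟩ ω)
    (Y : Ω → ℝ) (hYmeas : Measurable Y)
    (hY01 : ∀ᵐ ω ∂P, Y ω = 0 ∨ Y ω = 1)
    (hYcond : ∀ f : (Fin k → ℝ) → ℝ, Measurable f →
      Integrable (fun ω => f (X ω)) P →
      ∫ ω, Y ω * f (X ω) ∂P = ∫ ω, sigmoid (∑ j, X ω j) * f (X ω) ∂P)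
    (w v : ℕ → ℝ)
    (huniq : ∀ i < p * k, ∀ w' v' : ℝ,
      rvBceLoss P Y (fun ω => w' * X ω ⟨i % k, Nat.mod_lt i hk0⟩
          + v' * cyclicLogit hk0 X w v i ω)
        ≤ rvBceLoss P Y (cyclicLogit hk0 X w v (i + 1)) →
      (fun ω => w' * X ω ⟨i % k, Nat.mod_lt i hk0⟩ + v' * cyclicLogit hk0 X w v i ω)
        =ᵐ[P] cyclicLogit hk0 X w v (i + 1)) :
    ∃ c : Fin k → ℝ, (∀ j : Fin k, (j : ℕ) < k - p → c j = 0) ∧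
      cyclicLogit hk0 X w v (p * k) =ᵐ[P] fun ω => ∑ j, c j * X ω j := by
  have H : IsHardInstance P hk0 Z X Y :=
    .of_gaussian hZmeas hZindep hZgauss hX0 hXsucc hYmeas hY01 hYcond
  have hpasses : ∀ q ≤ p, InFeatureSpan P X (k - q) (cyclicLogit hk0 X w v (q * k)) := by
    intro q hq
    induction q with
    | zero => rw [Nat.zero_mul]; exact InFeatureSpan.zero
    | succ q ih => exact H.inFeatureSpan_cyclicLogit_pass (by omega) hpk huniq (ih (by omega))
  exact hpasses p le_rfl
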